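/- arXiv:math/0501201 — 4 statements merged into one kernel-verified Lean document; each statement's English description precedes it below -/
import Mathlib

section
/- For every 0 ≤ k ≤ l ≤ n−1, the quantities v_{k,l} = q_{k,l}ᵀ R e_l and v'_{k,l} = p_{k,l}ᵀ R e_k are real and strictly positive. In particular, for every 0 ≤ k < l ≤ n−1 the denominators q_{k+1,l}ᵀ R e_l and p_{k,l−1}ᵀ R e_k appearing in the recursion are nonzero. -/
open Matrix
open scoped ComplexOrder

noncomputable section

/-- The `k`-th standard basis vector of `ℂⁿ` (zero if `k ≥ n`). -/
def eVec (n : ℕ) (k : ℕ) : Fin n → ℂ := fun j => if (j : ℕ) = k then 1 else 0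

/-- `vᵀ R w`. -/
def bform {n : ℕ} (R : Matrix (Fin n) (Fin n) ℂ) (v w : Fin n → ℂ) : ℂ :=
  v ⬝ᵥ R.mulVec w

/-- Joint recursion computing the pair `(p_{k,k+d}, q_{k,k+d})`. -/
def pqAux {n : ℕ} (R : Matrix (Fin n) (Fin n) ℂ) : ℕ → ℕ → (Fin n → ℂ) × (Fin n → ℂ)
  | 0, k => (eVec n k, eVec n k)
  | d + 1, k =>
      let p := (pqAux R d k).1
      let q := (pqAux R d (k + 1)).2
      let l := k + d + 1
      let a := bform R p (eVec n l) / bform R q (eVec n l)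
      let a' := bform R q (eVec n k) / bform R p (eVec n k)
      (p - a • q, q - a' • p)

/-- The orthogonal polynomial `p_{k,l}`. -/
def pVec {n : ℕ} (R : Matrix (Fin n) (Fin n) ℂ) (k l : ℕ) : Fin n → ℂ :=
  (pqAux R (l - k) k).1

/-- The orthogonal polynomial `q_{k,l}`. -/
def qVec {n : ℕ} (R : Matrix (Fin n) (Fin n) ℂ) (k l : ℕ) : Fin n → ℂ :=
  (pqAux R (l - k) k).2

/-- The generalized reflection coefficient `a_{k,l}`. -/
def aCoef {n : ℕ} (R : Matrix (Fin n) (Fin n) ℂ) (k l : ℕ) : ℂ :=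
  bform R (pVec R k (l - 1)) (eVec n l) / bform R (qVec R (k + 1) l) (eVec n l)

/-- The generalized reflection coefficient `a'_{k,l}`. -/
def aCoef' {n : ℕ} (R : Matrix (Fin n) (Fin n) ℂ) (k l : ℕ) : ℂ :=
  bform R (qVec R (k + 1) l) (eVec n k) / bform R (pVec R k (l - 1)) (eVec n k)

/-- `v_{k,l} = q_{k,l}ᵀ R e_l`. -/
def vSc {n : ℕ} (R : Matrix (Fin n) (Fin n) ℂ) (k l : ℕ) : ℂ :=
  bform R (qVec R k l) (eVec n l)

/-- `v'_{k,l} = p_{k,l}ᵀ R e_k`. -/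
def vSc' {n : ℕ} (R : Matrix (Fin n) (Fin n) ℂ) (k l : ℕ) : ℂ :=
  bform R (pVec R k l) (eVec n k)

section Lemmas
variable {n : ℕ} (R : Matrix (Fin n) (Fin n) ℂ)

lemma bform_eVec (w : Fin n → ℂ) (i : Fin n) :
    bform R w (eVec n (i : ℕ)) = (Matrix.vecMul w R) i := by
  unfold bform eVec
  rw [Matrix.dotProduct_mulVec]
  simp [dotProduct, Fin.val_eq_val, mul_ite]

lemma bform_sub_smul (u v w : Fin n → ℂ) (c : ℂ) :
    bform R (u - c • v) w = bform R u w - c * bform R v w := by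
  unfold bform
  simp [sub_dotProduct, smul_dotProduct, smul_eq_mul]

/-- Core positivity lemma. -/
lemma pos_key (hR : R.PosDef) (w : Fin n → ℂ) (k l m : ℕ) (hl : l < n)
    (hkm : k ≤ m) (hml : m ≤ l)
    (hsupp : ∀ j : Fin n, ((j : ℕ) < k ∨ l < (j : ℕ)) → w j = 0)
    (hone : ∀ j : Fin n, (j : ℕ) = m → w j = 1)
    (horth : ∀ j : Fin n, k ≤ (j : ℕ) → (j : ℕ) ≤ l → (j : ℕ) ≠ m →
      bform R w (eVec n (j : ℕ)) = 0) :
    0 < bform R w (eVec n m) := by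
  have hm : m < n := lt_of_le_of_lt hml hl
  set m0 : Fin n := ⟨m, hm⟩ with hm0
  have hwm : w m0 = 1 := hone m0 rfl
  have hx : star w ≠ 0 := by
    intro h
    have := congrFun h m0
    simp [hwm, Pi.zero_apply] at this
  have hq := hR.dotProduct_mulVec_pos hx
  rw [star_star] at hq
  have hRw : R.mulVec (star w) = star (Matrix.vecMul w R) := by
    funext i
    simp only [Matrix.mulVec, Matrix.vecMul, dotProduct, Pi.star_apply, star_sum,
      star_mul']
    refine Finset.sum_congr rfl fun j _ => ?_
    rw [← hR.1.apply i j, mul_comm]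
  rw [hRw] at hq
  have hsum : w ⬝ᵥ star (Matrix.vecMul w R) = star (bform R w (eVec n m)) := by
    have hb : bform R w (eVec n m) = (Matrix.vecMul w R) m0 := bform_eVec R w m0
    rw [hb, dotProduct]
    rw [Finset.sum_eq_single m0]
    · simp [hwm]
    · intro j _ hj
      rcases lt_or_ge (j : ℕ) k with h1 | h1
      · simp [hsupp j (Or.inl h1)]
      rcases lt_or_ge l (j : ℕ) with h2 | h2
      · simp [hsupp j (Or.inr h2)]
      have hjm : (j : ℕ) ≠ m := fun h => hj (Fin.ext h)
      have := horth j h1 h2 hjm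
      rw [bform_eVec R w j] at this
      simp [this]
    · intro h; exact absurd (Finset.mem_univ m0) h
  rw [hsum] at hq
  set v := bform R w (eVec n m)
  rw [Complex.lt_def] at hq ⊢
  constructor
  · simpa using hq.1
  · have := hq.2
    simp only [Complex.zero_im, RCLike.star_def, Complex.conj_im] at this
    simp only [Complex.zero_im]
    linarith [this]


lemma pqAux_props (hR : R.PosDef) :
    ∀ d k, k + d < n →
      (∀ j : Fin n, (j : ℕ) = k → (pqAux R d k).1 j = 1) ∧
      (∀ j : Fin n, ((j : ℕ) < k ∨ k + d < (j : ℕ)) → (pqAux R d k).1 j = 0) ∧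
      (∀ j : Fin n, (j : ℕ) = k + d → (pqAux R d k).2 j = 1) ∧
      (∀ j : Fin n, ((j : ℕ) < k ∨ k + d < (j : ℕ)) → (pqAux R d k).2 j = 0) ∧
      (∀ i : ℕ, k < i → i ≤ k + d → bform R (pqAux R d k).1 (eVec n i) = 0) ∧
      (∀ i : ℕ, k ≤ i → i < k + d → bform R (pqAux R d k).2 (eVec n i) = 0) := by
  intro d
  induction d with
  | zero =>
    intro k hk
    refine ⟨?_, ?_, ?_, ?_, ?_, ?_⟩
    · intro j hj; simp [pqAux, eVec, hj]
    · intro j hj; simp only [pqAux, eVec]; rw [if_neg]; omega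
    · intro j hj; simp [pqAux, eVec]; omega
    · intro j hj; simp only [pqAux, eVec]; rw [if_neg]; omega
    · intro i h1 h2; omega
    · intro i h1 h2; omega
  | succ d ih =>
    intro k hk
    obtain ⟨hp1, hp0, _, _, hporth, _⟩ := ih k (by omega)
    obtain ⟨_, _, hq1, hq0, _, hqorth⟩ := ih (k + 1) (by omega)
    set p := (pqAux R d k).1 with hp
    set q := (pqAux R d (k + 1)).2 with hq
    have e1 : (pqAux R (d + 1) k).1 =
        p - (bform R p (eVec n (k + d + 1)) / bform R q (eVec n (k + d + 1))) • q := rfl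
    have e2 : (pqAux R (d + 1) k).2 =
        q - (bform R q (eVec n k) / bform R p (eVec n k)) • p := rfl
    have hqpos : 0 < bform R q (eVec n (k + d + 1)) := by
      have h := pos_key R hR q (k + 1) (k + 1 + d) (k + 1 + d) (by omega) (by omega) le_rfl
        hq0 (fun j hj => hq1 j hj)
        (fun j h1 h2 h3 => hqorth j h1 (by omega))
      have : k + 1 + d = k + d + 1 := by omega
      rwa [this] at h
    have hppos : 0 < bform R p (eVec n k) := by
      exact pos_key R hR p k (k + d) k (by omega) le_rfl (by omega)
        hp0 hp1 (fun j h1 h2 h3 => hporth j (by omega) h2)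
    have hqne : bform R q (eVec n (k + d + 1)) ≠ 0 := ne_of_gt hqpos
    have hpne : bform R p (eVec n k) ≠ 0 := ne_of_gt hppos
    refine ⟨?_, ?_, ?_, ?_, ?_, ?_⟩
    · intro j hj
      rw [e1]
      simp only [Pi.sub_apply, Pi.smul_apply, smul_eq_mul]
      rw [hp1 j hj, hq0 j (Or.inl (by omega))]
      ring
    · intro j hj
      rw [e1]
      simp only [Pi.sub_apply, Pi.smul_apply, smul_eq_mul]
      rw [hp0 j (by omega), hq0 j (by omega)]
      ring
    · intro j hj
      rw [e2]
      simp only [Pi.sub_apply, Pi.smul_apply, smul_eq_mul]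
      rw [hq1 j (by omega), hp0 j (Or.inr (by omega))]
      ring
    · intro j hj
      rw [e2]
      simp only [Pi.sub_apply, Pi.smul_apply, smul_eq_mul]
      rw [hq0 j (by omega), hp0 j (by omega)]
      ring
    · intro i h1 h2
      rw [e1, bform_sub_smul]
      rcases Nat.lt_or_ge i (k + d + 1) with h3 | h3
      · rw [hporth i h1 (by omega), hqorth i (by omega) (by omega)]
        ring
      · have hi : i = k + d + 1 := by omega
        subst hi
        rw [div_mul_cancel₀ _ hqne, sub_self]
    · intro i h1 h2
      rw [e2, bform_sub_smul]
      rcases Nat.lt_or_ge k i with h3 | h3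
      · rw [hqorth i (by omega) (by omega), hporth i h3 (by omega)]
        ring
      · have hi : i = k := by omega
        subst hi
        rw [div_mul_cancel₀ _ hpne, sub_self]
end Lemmas

/-- For `0 ≤ k ≤ l ≤ n-1`, the quantities `v_{k,l}` and `v'_{k,l}` are (real and)
strictly positive; in particular for `k < l` the denominators in the recursion are nonzero. -/
theorem stmt0 (n : ℕ) (hn : 1 ≤ n) (R : Matrix (Fin n) (Fin n) ℂ) (hR : R.PosDef) :
    (∀ k l : ℕ, k ≤ l → l ≤ n - 1 → 0 < vSc R k l ∧ 0 < vSc' R k l) ∧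
    (∀ k l : ℕ, k < l → l ≤ n - 1 →
      bform R (qVec R (k + 1) l) (eVec n l) ≠ 0 ∧
      bform R (pVec R k (l - 1)) (eVec n k) ≠ 0) := by
  have main : ∀ k l : ℕ, k ≤ l → l ≤ n - 1 → 0 < vSc R k l ∧ 0 < vSc' R k l := by
    intro k l hkl hln
    have hl : l < n := by omega
    obtain ⟨hp1, hp0, hq1, hq0, hporth, hqorth⟩ := pqAux_props R hR (l - k) k (by omega)
    have hkd : k + (l - k) = l := by omega
    rw [hkd] at hp0 hq1 hq0 hporth hqorth
    constructor
    · exact pos_key R hR _ k l l hl hkl le_rfl hq0 hq1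
        (fun j h1 h2 h3 => hqorth j h1 (by omega))
    · exact pos_key R hR _ k l k hl le_rfl hkl hp0 hp1
        (fun j h1 h2 h3 => hporth j (by omega) h2)
  refine ⟨main, ?_⟩
  intro k l hkl hln
  constructor
  · exact ne_of_gt (main (k + 1) l hkl hln).1
  · exact ne_of_gt (main k (l - 1) (by omega) (by omega)).2
end
end

section
/- Let R^P be the n×n matrix whose k-th column is p_{k,n−1} for k = 0, …, n−1, and let D^P := (R^P)ᵀ R (R^P)* (where * denotes entrywise complex conjugation). Then D^P is a diagonal matrix with strictly positive real diagonal entries, and R⁻¹ = (R^P)* (D^P)⁻¹ (R^P)ᵀ. -/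
open Matrix
open scoped ComplexOrder

noncomputable section

variable {n : ℕ} (R : Matrix (Fin n) (Fin n) ℂ)

lemma bform_eq (v w : Fin n → ℂ) : bform R v w = vecMul v R ⬝ᵥ w :=
  dotProduct_mulVec v R w

lemma bform_eVec_s6 (v : Fin n → ℂ) (l : ℕ) (hl : l < n) :
    bform R v (eVec n l) = vecMul v R ⟨l, hl⟩ := by
  have he : eVec n l = fun j : Fin n => if j = ⟨l, hl⟩ then (1:ℂ) else 0 := by
    funext j; simp [eVec, Fin.ext_iff]
  rw [bform_eq, he]
  simp [dotProduct]

lemma bform_pos (hR : R.PosDef) (v : Fin n → ℂ) (hv : v ≠ 0) :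
    0 < bform R v (fun j => star (v j)) := by
  have hx : (fun j => star (v j)) ≠ 0 := by
    intro h
    apply hv
    funext j
    have := congrFun h j
    simpa using congrArg star this
  have h := hR.dotProduct_mulVec_pos hx
  have hsx : (star fun j => star (v j)) = v := by funext j; simp
  have heq : bform R v (fun j => star (v j))
      = (star fun j => star (v j)) ⬝ᵥ R *ᵥ fun j => star (v j) := by rw [hsx]; rfl
  rw [heq]
  exact h

lemma bform_expand (v w : Fin n → ℂ) :
    bform R v w = ∑ j, vecMul v R j * w j := by
  rw [bform_eq]; rfl

lemma vecMul_sub_smul (p q : Fin n → ℂ) (a : ℂ) (j : Fin n) :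
    vecMul (p - a • q) R j = vecMul p R j - a * vecMul q R j := by
  simp [vecMul, dotProduct, sub_mul, Finset.sum_sub_distrib, Finset.mul_sum, mul_assoc]

lemma key (hR : R.PosDef) :
    ∀ d k : ℕ, k + d < n →
      (∀ j : Fin n, ((j:ℕ) < k ∨ k + d < (j:ℕ)) → (pqAux R d k).1 j = 0) ∧
      (∀ j : Fin n, (j:ℕ) = k → (pqAux R d k).1 j = 1) ∧
      (∀ j : Fin n, ((j:ℕ) < k ∨ k + d < (j:ℕ)) → (pqAux R d k).2 j = 0) ∧
      (∀ j : Fin n, (j:ℕ) = k + d → (pqAux R d k).2 j = 1) ∧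
      (∀ j : Fin n, k < (j:ℕ) → (j:ℕ) ≤ k + d → vecMul (pqAux R d k).1 R j = 0) ∧
      (∀ j : Fin n, k ≤ (j:ℕ) → (j:ℕ) < k + d → vecMul (pqAux R d k).2 R j = 0) := by
  intro d
  induction d with
  | zero =>
    intro k hk
    refine ⟨?_, ?_, ?_, ?_, ?_, ?_⟩
    · intro j hj; simp only [pqAux, eVec]; split <;> [omega; rfl]
    · intro j hj; simp only [pqAux, eVec]; split <;> [rfl; omega]
    · intro j hj; simp only [pqAux, eVec]; split <;> [omega; rfl]
    · intro j hj; simp only [pqAux, eVec]; split <;> [rfl; omega]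
    · intro j h1 h2; omega
    · intro j h1 h2; omega
  | succ d ih =>
    intro k hk
    obtain ⟨hp0, hp1, -, -, hpo, -⟩ := ih k (by omega)
    obtain ⟨-, -, hq0, hq1, -, hqo⟩ := ih (k+1) (by omega)
    set p := (pqAux R d k).1 with hpdef
    set q := (pqAux R d (k+1)).2 with hqdef
    have hl : k + d + 1 < n := by omega
    have hkn : k < n := by omega
    have hql1 : q ⟨k+d+1, hl⟩ = 1 := hq1 _ (by simp; omega)
    have hpk1 : p ⟨k, hkn⟩ = 1 := hp1 _ rfl
    -- positivity of the two denominators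
    have hqpos : 0 < bform R q (eVec n (k+d+1)) := by
      have hsum : bform R q (fun j => star (q j)) = bform R q (eVec n (k+d+1)) := by
        rw [bform_expand, bform_eVec_s6 R q _ hl]
        rw [Finset.sum_eq_single (⟨k+d+1, hl⟩ : Fin n)]
        · rw [hql1]; simp
        · intro j _ hj
          have hjne : (j:ℕ) ≠ k+d+1 := fun hc => hj (Fin.ext hc)
          rcases lt_or_ge (j:ℕ) (k+1) with h | h
          · simp [hq0 j (Or.inl h)]
          · rcases lt_or_ge (k+d+1) (j:ℕ) with h2 | h2
            · simp [hq0 j (Or.inr (by omega))]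
            · simp [hqo j (by omega) (by omega)]
        · simp
      rw [← hsum]
      apply bform_pos R hR
      intro h0
      have := congrFun h0 ⟨k+d+1, hl⟩
      rw [hql1] at this
      simp at this
    have hppos : 0 < bform R p (eVec n k) := by
      have hsum : bform R p (fun j => star (p j)) = bform R p (eVec n k) := by
        rw [bform_expand, bform_eVec_s6 R p _ hkn]
        rw [Finset.sum_eq_single (⟨k, hkn⟩ : Fin n)]
        · rw [hpk1]; simp
        · intro j _ hj
          have hjne : (j:ℕ) ≠ k := fun hc => hj (Fin.ext hc)
          rcases lt_or_ge (j:ℕ) k with h | h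
          · simp [hp0 j (Or.inl h)]
          · rcases lt_or_ge (k+d) (j:ℕ) with h2 | h2
            · simp [hp0 j (Or.inr h2)]
            · simp [hpo j (by omega) (by omega)]
        · simp
      rw [← hsum]
      apply bform_pos R hR
      intro h0
      have := congrFun h0 ⟨k, hkn⟩
      rw [hpk1] at this
      simp at this
    have hqne : bform R q (eVec n (k+d+1)) ≠ 0 := ne_of_gt hqpos
    have hpne : bform R p (eVec n k) ≠ 0 := ne_of_gt hppos
    set a := bform R p (eVec n (k+d+1)) / bform R q (eVec n (k+d+1)) with hadef
    set a' := bform R q (eVec n k) / bform R p (eVec n k) with ha'def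
    have h1 : (pqAux R (d+1) k).1 = p - a • q := rfl
    have h2 : (pqAux R (d+1) k).2 = q - a' • p := rfl
    refine ⟨?_, ?_, ?_, ?_, ?_, ?_⟩
    · intro j hj
      rw [h1]
      have e1 : p j = 0 := hp0 j (by omega)
      have e2 : q j = 0 := hq0 j (by omega)
      simp [e1, e2]
    · intro j hj
      rw [h1]
      have e2 : q j = 0 := hq0 j (by omega)
      simp [hp1 j hj, e2]
    · intro j hj
      rw [h2]
      have e1 : p j = 0 := hp0 j (by omega)
      have e2 : q j = 0 := hq0 j (by omega)
      simp [e1, e2]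
    · intro j hj
      rw [h2]
      have e1 : p j = 0 := hp0 j (by omega)
      have e2 : q j = 1 := hq1 j (by omega)
      simp [e1, e2]
    · intro j hj1 hj2
      rw [h1, vecMul_sub_smul]
      rcases lt_or_ge (j:ℕ) (k+d+1) with h | h
      · rw [hpo j hj1 (by omega), hqo j (by omega) (by omega)]
        simp
      · have hje : j = ⟨k+d+1, hl⟩ := Fin.ext (show (j:ℕ) = k+d+1 by omega)
        rw [hje, ← bform_eVec_s6 R p _ hl, ← bform_eVec_s6 R q _ hl, hadef,
          div_mul_cancel₀ _ hqne, sub_self]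
    · intro j hj1 hj2
      rw [h2, vecMul_sub_smul]
      rcases lt_or_ge k (j:ℕ) with h | h
      · rw [hqo j (by omega) (by omega), hpo j (by omega) (by omega)]
        simp
      · have hje : j = ⟨k, hkn⟩ := Fin.ext (show (j:ℕ) = k by omega)
        rw [hje, ← bform_eVec_s6 R q _ hkn, ← bform_eVec_s6 R p _ hkn, ha'def,
          div_mul_cancel₀ _ hpne, sub_self]



/-- Cholesky-type factorization of `R⁻¹` from the `p` polynomials:
with `R^P = [p_{0,n-1}, …, p_{n-1,n-1}]` and `D^P = (R^P)ᵀ R (R^P)*`, the matrix `D^P` is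
diagonal with strictly positive (real) diagonal entries, and
`R⁻¹ = (R^P)* (D^P)⁻¹ (R^P)ᵀ`. -/
theorem stmt6 (n : ℕ) (hn : 1 ≤ n) (R : Matrix (Fin n) (Fin n) ℂ) (hR : R.PosDef) :
    let RP : Matrix (Fin n) (Fin n) ℂ := Matrix.of fun i k => pVec R (k : ℕ) (n - 1) i
    let DP : Matrix (Fin n) (Fin n) ℂ := RPᵀ * R * RP.map (starRingEnd ℂ)
    DP.IsDiag ∧ (∀ i : Fin n, 0 < DP i i) ∧
      R⁻¹ = RP.map (starRingEnd ℂ) * DP⁻¹ * RPᵀ := by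
  intro RP DP
  set pcol : Fin n → Fin n → ℂ := fun k => pVec R (k:ℕ) (n-1) with hpcol
  have hprop : ∀ k : Fin n,
      (∀ j : Fin n, ((j:ℕ) < (k:ℕ)) → pcol k j = 0) ∧
      (pcol k k = 1) ∧
      (∀ j : Fin n, (k:ℕ) < (j:ℕ) → vecMul (pcol k) R j = 0) := by
    intro k
    have hk : (k:ℕ) + (n - 1 - (k:ℕ)) < n := by omega
    obtain ⟨hp0, hp1, -, -, hpo, -⟩ := key R hR (n - 1 - (k:ℕ)) (k:ℕ) hk
    show (∀ j : Fin n, ((j:ℕ) < (k:ℕ)) → (pqAux R (n - 1 - (k:ℕ)) (k:ℕ)).1 j = 0) ∧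
      ((pqAux R (n - 1 - (k:ℕ)) (k:ℕ)).1 k = 1) ∧
      (∀ j : Fin n, (k:ℕ) < (j:ℕ) → vecMul (pqAux R (n - 1 - (k:ℕ)) (k:ℕ)).1 R j = 0)
    exact ⟨fun j hj => hp0 j (Or.inl hj), hp1 k rfl, fun j hj => hpo j hj (by omega)⟩
  have hDPdef : DP = RPᵀ * R * RP.map (starRingEnd ℂ) := rfl
  -- entries of DP
  have hDP : ∀ k m : Fin n, DP k m = ∑ j, vecMul (pcol k) R j * star (pcol m j) := by
    intro k m
    show (RPᵀ * R * RP.map (starRingEnd ℂ)) k m = _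
    simp only [Matrix.mul_apply, Matrix.transpose_apply, Matrix.map_apply, Matrix.of_apply,
      vecMul, dotProduct, Finset.sum_mul]
    rfl
  -- hermitian symmetry of DP
  have e1 : (RP.map (starRingEnd ℂ))ᴴ = RPᵀ := by
    ext i j; simp [conjTranspose_apply, Matrix.map_apply]
  have e2 : (RPᵀ)ᴴ = RP.map (starRingEnd ℂ) := by
    ext i j; simp [conjTranspose_apply, Matrix.map_apply]
  have hH : DPᴴ = DP := by
    rw [hDPdef, conjTranspose_mul, conjTranspose_mul, e1, e2, hR.1.eq, mul_assoc]
  have hherm : ∀ k m : Fin n, star (DP k m) = DP m k := by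
    intro k m
    have := congrFun (congrFun hH m) k
    rwa [conjTranspose_apply] at this
  -- diagonal
  have hoffdiag : ∀ k m : Fin n, (k:ℕ) < (m:ℕ) → DP k m = 0 := by
    intro k m hkm
    rw [hDP]
    apply Finset.sum_eq_zero
    intro j _
    rcases lt_or_ge (j:ℕ) (m:ℕ) with h | h
    · rw [(hprop m).1 j h]; simp
    · rw [(hprop k).2.2 j (by omega)]; simp
  have hdiag : DP.IsDiag := by
    intro k m hkm
    rcases lt_trichotomy (k:ℕ) (m:ℕ) with h | h | h
    · exact hoffdiag k m h
    · exact absurd (Fin.ext h) hkm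
    · rw [← hherm m k, hoffdiag m k h, star_zero]
  -- positive diagonal
  have hpos : ∀ k : Fin n, 0 < DP k k := by
    intro k
    have : DP k k = bform R (pcol k) (fun j => star (pcol k j)) := by
      rw [hDP, bform_expand]
    rw [this]
    apply bform_pos R hR
    intro h0
    have := congrFun h0 k
    rw [(hprop k).2.1] at this
    simp at this
  refine ⟨hdiag, hpos, ?_⟩
  -- determinants
  have hRPlow : ∀ i j : Fin n, i < j → RP i j = 0 := by
    intro i j hij
    exact (hprop j).1 i hij
  have hRPdiag : ∀ i : Fin n, RP i i = 1 := fun i => (hprop i).2.1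
  have hdetRP : RP.det = 1 := by
    rw [Matrix.det_of_lowerTriangular RP hRPlow]
    simp [hRPdiag]
  have hdetRPS : (RP.map (starRingEnd ℂ)).det = 1 := by
    rw [Matrix.det_of_lowerTriangular _ (fun i j hij => by
      simp [Matrix.map_apply, hRPlow i j hij])]
    simp [Matrix.map_apply, hRPdiag]
  have hRPSunit : IsUnit (RP.map (starRingEnd ℂ)).det := by rw [hdetRPS]; exact isUnit_one
  have hdetDP : IsUnit DP.det := by
    have : ∀ i j : Fin n, i < j → DP i j = 0 := fun i j hij => hdiag (Fin.ne_of_lt hij)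
    rw [Matrix.det_of_lowerTriangular DP this]
    rw [isUnit_iff_ne_zero]
    exact Finset.prod_ne_zero_iff.mpr fun i _ => ne_of_gt (hpos i)
  -- inverse formula
  have hkey : DP * (RP.map (starRingEnd ℂ))⁻¹ = RPᵀ * R := by
    rw [hDPdef, Matrix.mul_assoc, Matrix.mul_nonsing_inv _ hRPSunit, Matrix.mul_one]
  have hleft : (RP.map (starRingEnd ℂ) * DP⁻¹ * RPᵀ) * R = 1 := by
    rw [Matrix.mul_assoc, Matrix.mul_assoc, ← hkey, ← Matrix.mul_assoc DP⁻¹,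
      Matrix.nonsing_inv_mul _ hdetDP, Matrix.one_mul,
      Matrix.mul_nonsing_inv _ hRPSunit]
  exact Matrix.inv_eq_left_inv hleft
end
end

section
/- (Property 2) Fix 0 ≤ s ≤ d ≤ n−1 and let ⁰R^{s,d} be the n×n matrix whose (i,j) entry equals r_{i,j} if s ≤ i ≤ d and s ≤ j ≤ d, and 0 otherwise. Then for all s ≤ k < l ≤ d, the recursion entities of ⁰R^{s,d} coincide with those of R: p_{k,l}(⁰R^{s,d}) = p_{k,l}(R), q_{k,l}(⁰R^{s,d}) = q_{k,l}(R), a_{k,l}(⁰R^{s,d}) = a_{k,l}(R), a'_{k,l}(⁰R^{s,d}) = a'_{k,l}(R), v_{k,l}(⁰R^{s,d}) = v_{k,l}(R), and v'_{k,l}(⁰R^{s,d}) = v'_{k,l}(R). -/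
open Matrix
open scoped ComplexOrder

noncomputable section

/-!
By induction on `l - k`, the vectors `p_{k,l}` and `q_{k,l}` are supported on the indices
`k, …, l`. Every scalar entering the recursion is a form `vᵀ M e_m` with `v` supported in
`[s, d]` and `s ≤ m ≤ d`, so it only reads the block `[s, d] × [s, d]` of `M`, on which
`⁰R^{s,d}` and `R` agree; the same induction then shows that the two recursions coincide.
-/

open Set Function

lemma bform_congr_of_support_subset {n : ℕ} {M R : Matrix (Fin n) (Fin n) ℂ} {S : Set (Fin n)}
    (hMR : ∀ i ∈ S, ∀ j ∈ S, M i j = R i j) {v w : Fin n → ℂ}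
    (hv : support v ⊆ S) (hw : support w ⊆ S) :
    bform M v w = bform R v w := by
  unfold bform Matrix.mulVec dotProduct
  refine Finset.sum_congr rfl fun i _ => ?_
  by_cases hvi : v i = 0
  · simp [hvi]
  refine congrArg (v i * ·) (Finset.sum_congr rfl fun j _ => ?_)
  by_cases hwj : w j = 0
  · simp [hwj]
  exact congrArg (· * w j) (hMR i (hv hvi) j (hw hwj))

lemma support_eVec_subset {n m s d : ℕ} (hsm : s ≤ m) (hmd : m ≤ d) :
    support (eVec n m) ⊆ Fin.val ⁻¹' Icc s d := by
  intro i hi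
  have him : (i : ℕ) = m := by_contra fun h => hi (if_neg h)
  exact ⟨him ▸ hsm, him ▸ hmd⟩

lemma support_pqAux_subset {n : ℕ} (R : Matrix (Fin n) (Fin n) ℂ) (e k : ℕ) :
    support (pqAux R e k).1 ⊆ Fin.val ⁻¹' Icc k (k + e) ∧
      support (pqAux R e k).2 ⊆ Fin.val ⁻¹' Icc k (k + e) := by
  induction e generalizing k with
  | zero => exact ⟨support_eVec_subset le_rfl le_rfl, support_eVec_subset le_rfl le_rfl⟩
  | succ e ih =>
    have hp : support (pqAux R e k).1 ⊆ Fin.val ⁻¹' Icc k (k + (e + 1)) :=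
      (ih k).1.trans (preimage_mono (Icc_subset_Icc le_rfl (by omega)))
    have hq : support (pqAux R e (k + 1)).2 ⊆ Fin.val ⁻¹' Icc k (k + (e + 1)) :=
      (ih (k + 1)).2.trans (preimage_mono (Icc_subset_Icc (by omega) (by omega)))
    simp only [pqAux]
    exact ⟨(support_sub _ _).trans (union_subset hp ((support_const_smul_subset _ _).trans hq)),
      (support_sub _ _).trans (union_subset hq ((support_const_smul_subset _ _).trans hp))⟩

lemma support_pVec_subset {n : ℕ} (R : Matrix (Fin n) (Fin n) ℂ) {k l : ℕ} (hkl : k ≤ l) :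
    support (pVec R k l) ⊆ Fin.val ⁻¹' Icc k l := by
  simpa only [pVec, Nat.add_sub_cancel' hkl] using (support_pqAux_subset R (l - k) k).1

lemma support_qVec_subset {n : ℕ} (R : Matrix (Fin n) (Fin n) ℂ) {k l : ℕ} (hkl : k ≤ l) :
    support (qVec R k l) ⊆ Fin.val ⁻¹' Icc k l := by
  simpa only [qVec, Nat.add_sub_cancel' hkl] using (support_pqAux_subset R (l - k) k).2

section BlockCongr

variable {n : ℕ} {M R : Matrix (Fin n) (Fin n) ℂ} {s d : ℕ}

lemma bform_eVec_congr
    (hMR : ∀ i ∈ Fin.val ⁻¹' Icc s d, ∀ j ∈ Fin.val ⁻¹' Icc s d, M i j = R i j)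
    {v : Fin n → ℂ} (hv : support v ⊆ Fin.val ⁻¹' Icc s d) {m : ℕ} (hsm : s ≤ m) (hmd : m ≤ d) :
    bform M v (eVec n m) = bform R v (eVec n m) :=
  bform_congr_of_support_subset hMR hv (support_eVec_subset hsm hmd)

lemma pqAux_congr
    (hMR : ∀ i ∈ Fin.val ⁻¹' Icc s d, ∀ j ∈ Fin.val ⁻¹' Icc s d, M i j = R i j)
    {e k : ℕ} (hsk : s ≤ k) (hkd : k + e ≤ d) :
    pqAux M e k = pqAux R e k := by
  induction e generalizing k with
  | zero => rfl
  | succ e ih =>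
    have hp : support (pqAux R e k).1 ⊆ Fin.val ⁻¹' Icc s d :=
      (support_pqAux_subset R e k).1.trans (preimage_mono (Icc_subset_Icc hsk (by omega)))
    have hq : support (pqAux R e (k + 1)).2 ⊆ Fin.val ⁻¹' Icc s d :=
      (support_pqAux_subset R e (k + 1)).2.trans
        (preimage_mono (Icc_subset_Icc (by omega) (by omega)))
    simp only [pqAux, ih hsk (by omega), ih (k := k + 1) (by omega) (by omega),
      bform_eVec_congr hMR hp hsk (by omega : k ≤ d),
      bform_eVec_congr hMR hp (by omega : s ≤ k + e + 1) (by omega),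
      bform_eVec_congr hMR hq hsk (by omega : k ≤ d),
      bform_eVec_congr hMR hq (by omega : s ≤ k + e + 1) (by omega)]

variable {k l : ℕ}

lemma pVec_congr
    (hMR : ∀ i ∈ Fin.val ⁻¹' Icc s d, ∀ j ∈ Fin.val ⁻¹' Icc s d, M i j = R i j)
    (hsk : s ≤ k) (hkl : k ≤ l) (hld : l ≤ d) : pVec M k l = pVec R k l := by
  rw [pVec, pVec, pqAux_congr hMR hsk (by omega)]

lemma qVec_congr
    (hMR : ∀ i ∈ Fin.val ⁻¹' Icc s d, ∀ j ∈ Fin.val ⁻¹' Icc s d, M i j = R i j)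
    (hsk : s ≤ k) (hkl : k ≤ l) (hld : l ≤ d) : qVec M k l = qVec R k l := by
  rw [qVec, qVec, pqAux_congr hMR hsk (by omega)]

lemma bform_pVec_eVec_congr
    (hMR : ∀ i ∈ Fin.val ⁻¹' Icc s d, ∀ j ∈ Fin.val ⁻¹' Icc s d, M i j = R i j)
    (hsk : s ≤ k) (hkl : k ≤ l) (hld : l ≤ d) {m : ℕ}
    (hsm : s ≤ m) (hmd : m ≤ d) :
    bform M (pVec M k l) (eVec n m) = bform R (pVec R k l) (eVec n m) := by
  rw [pVec_congr hMR hsk hkl hld, bform_eVec_congr hMR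
    ((support_pVec_subset R hkl).trans (preimage_mono (Icc_subset_Icc hsk hld))) hsm hmd]

lemma bform_qVec_eVec_congr
    (hMR : ∀ i ∈ Fin.val ⁻¹' Icc s d, ∀ j ∈ Fin.val ⁻¹' Icc s d, M i j = R i j)
    (hsk : s ≤ k) (hkl : k ≤ l) (hld : l ≤ d) {m : ℕ}
    (hsm : s ≤ m) (hmd : m ≤ d) :
    bform M (qVec M k l) (eVec n m) = bform R (qVec R k l) (eVec n m) := by
  rw [qVec_congr hMR hsk hkl hld, bform_eVec_congr hMR
    ((support_qVec_subset R hkl).trans (preimage_mono (Icc_subset_Icc hsk hld))) hsm hmd]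

lemma aCoef_congr
    (hMR : ∀ i ∈ Fin.val ⁻¹' Icc s d, ∀ j ∈ Fin.val ⁻¹' Icc s d, M i j = R i j)
    (hsk : s ≤ k) (hkl : k < l) (hld : l ≤ d) : aCoef M k l = aCoef R k l := by
  rw [aCoef, aCoef, bform_pVec_eVec_congr hMR hsk (by omega) (by omega) (by omega) hld,
    bform_qVec_eVec_congr hMR (by omega) hkl hld (by omega) hld]

lemma aCoef'_congr
    (hMR : ∀ i ∈ Fin.val ⁻¹' Icc s d, ∀ j ∈ Fin.val ⁻¹' Icc s d, M i j = R i j)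
    (hsk : s ≤ k) (hkl : k < l) (hld : l ≤ d) : aCoef' M k l = aCoef' R k l := by
  rw [aCoef', aCoef', bform_pVec_eVec_congr hMR hsk (by omega) (by omega) hsk (by omega),
    bform_qVec_eVec_congr hMR (by omega) hkl hld hsk (by omega)]

lemma vSc_congr
    (hMR : ∀ i ∈ Fin.val ⁻¹' Icc s d, ∀ j ∈ Fin.val ⁻¹' Icc s d, M i j = R i j)
    (hsk : s ≤ k) (hkl : k ≤ l) (hld : l ≤ d) : vSc M k l = vSc R k l :=
  bform_qVec_eVec_congr hMR hsk hkl hld (by omega) hld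

lemma vSc'_congr
    (hMR : ∀ i ∈ Fin.val ⁻¹' Icc s d, ∀ j ∈ Fin.val ⁻¹' Icc s d, M i j = R i j)
    (hsk : s ≤ k) (hkl : k ≤ l) (hld : l ≤ d) : vSc' M k l = vSc' R k l :=
  bform_pVec_eVec_congr hMR hsk hkl hld hsk (by omega)

end BlockCongr

theorem stmt10_general (n : ℕ) (R : Matrix (Fin n) (Fin n) ℂ)
    (s d : ℕ) :
    let M : Matrix (Fin n) (Fin n) ℂ := Matrix.of fun i j =>
      if s ≤ (i : ℕ) ∧ (i : ℕ) ≤ d ∧ s ≤ (j : ℕ) ∧ (j : ℕ) ≤ d then R i j else 0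
    ∀ k l : ℕ, s ≤ k → k < l → l ≤ d →
      pVec M k l = pVec R k l ∧ qVec M k l = qVec R k l ∧
      aCoef M k l = aCoef R k l ∧ aCoef' M k l = aCoef' R k l ∧
      vSc M k l = vSc R k l ∧ vSc' M k l = vSc' R k l := by
  intro M k l hsk hkl hld
  have hMR : ∀ i ∈ Fin.val ⁻¹' Icc s d, ∀ j ∈ Fin.val ⁻¹' Icc s d, M i j = R i j := by
    rintro i ⟨hsi, hid⟩ j ⟨hsj, hjd⟩
    exact if_pos ⟨hsi, hid, hsj, hjd⟩
  exact ⟨pVec_congr hMR hsk hkl.le hld, qVec_congr hMR hsk hkl.le hld,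
    aCoef_congr hMR hsk hkl hld, aCoef'_congr hMR hsk hkl hld,
    vSc_congr hMR hsk hkl.le hld, vSc'_congr hMR hsk hkl.le hld⟩

/-- Property 2: the recursion entities of the bordered-by-zero submatrix `⁰R^{s,d}` coincide
with those of `R` for all `s ≤ k < l ≤ d`. -/
theorem stmt10 (n : ℕ) (hn : 1 ≤ n) (R : Matrix (Fin n) (Fin n) ℂ) (hR : R.PosDef)
    (s d : ℕ) (hsd : s ≤ d) (hd : d ≤ n - 1) :
    let M : Matrix (Fin n) (Fin n) ℂ := Matrix.of fun i j =>
      if s ≤ (i : ℕ) ∧ (i : ℕ) ≤ d ∧ s ≤ (j : ℕ) ∧ (j : ℕ) ≤ d then R i j else 0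
    ∀ k l : ℕ, s ≤ k → k < l → l ≤ d →
      pVec M k l = pVec R k l ∧ qVec M k l = qVec R k l ∧
      aCoef M k l = aCoef R k l ∧ aCoef' M k l = aCoef' R k l ∧
      vSc M k l = vSc R k l ∧ vSc' M k l = vSc' R k l :=
  stmt10_general n R s d
end
end

section
/- (Theorem 1, reflection coefficients) If R is an N×N Hermitian positive definite matrix that is block Toeplitz with block size n1, then for all 0 ≤ k < l ≤ N−1: a_{k,l} = a_{k mod n1, l − (k sec n1)} and a'_{k,l} = a'_{k mod n1, l − (k sec n1)}. -/
/-
Shifting coordinates by `n1` preserves the bilinear form `vᵀ R w` of a block-Toeplitz `R` as long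
as `v` and `w` live on indices that stay below `N` after the shift. The vectors `p_{k,l}`,
`q_{k,l}` are supported in `[k, l]`, so by induction on `l - k` the whole recursion started at
`k + n1` is the shift of the one started at `k`: `p_{k+n1,l+n1}` is `p_{k,l}` moved by `n1`, and
the coefficients `a`, `a'` are unchanged. Iterating `k / n1` times brings `k` down to `k mod n1`.
-/

open Matrix
open scoped ComplexOrder

noncomputable section

variable {N : ℕ}

def IsShiftInvariant (R : Matrix (Fin N) (Fin N) ℂ) (s : ℕ) : Prop :=
  ∀ (i j : Fin N) (hi : (i : ℕ) + s < N) (hj : (j : ℕ) + s < N),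
    R ⟨i + s, hi⟩ ⟨j + s, hj⟩ = R i j

/-- Shift of the coordinates by `s`; entries pushed past the end are dropped. -/
def shiftVec (s : ℕ) (v : Fin N → ℂ) : Fin N → ℂ :=
  fun j => if h : s ≤ (j : ℕ) then v ⟨j - s, by omega⟩ else 0

lemma shiftVec_apply_add (s : ℕ) (v : Fin N → ℂ) (j : Fin N) (h : (j : ℕ) + s < N) :
    shiftVec s v ⟨j + s, h⟩ = v j := by
  simp [shiftVec]

lemma shiftVec_apply_of_lt (s : ℕ) (v : Fin N → ℂ) (j : Fin N) (h : (j : ℕ) < s) :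
    shiftVec s v j = 0 :=
  dif_neg (by omega)

lemma shiftVec_eVec (s k : ℕ) : shiftVec s (eVec N k) = eVec N (k + s) := by
  ext j
  simp only [shiftVec, eVec]
  split_ifs <;> simp_all
  omega

lemma shiftVec_sub_smul (s : ℕ) (v w : Fin N → ℂ) (a : ℂ) :
    shiftVec s (v - a • w) = shiftVec s v - a • shiftVec s w := by
  ext j
  simp only [shiftVec, Pi.sub_apply, Pi.smul_apply]
  split_ifs <;> simp

lemma eVec_apply_of_ne (k : ℕ) (j : Fin N) (h : (j : ℕ) ≠ k) : eVec N k j = 0 :=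
  if_neg h

lemma Fin.exists_eq_mk_add_of_le {s : ℕ} (i : Fin N) (h : s ≤ (i : ℕ)) :
    ∃ (i₀ : Fin N) (h₀ : (i₀ : ℕ) + s < N), i = ⟨i₀ + s, h₀⟩ :=
  ⟨⟨i - s, by omega⟩, by simp; omega, Fin.ext (by simp; omega)⟩

lemma bform_eq_sum (R : Matrix (Fin N) (Fin N) ℂ) (v w : Fin N → ℂ) :
    bform R v w = ∑ ij : Fin N × Fin N, v ij.1 * R ij.1 ij.2 * w ij.2 := by
  simp [bform, dotProduct, mulVec, Finset.mul_sum, Fintype.sum_prod_type, mul_assoc]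

lemma pqAux_apply_eq_zero (R : Matrix (Fin N) (Fin N) ℂ) (d k : ℕ) (j : Fin N)
    (hj : k + d < j) : (pqAux R d k).1 j = 0 ∧ (pqAux R d k).2 j = 0 := by
  induction d generalizing k with
  | zero => simp [pqAux, eVec_apply_of_ne k j (by omega)]
  | succ d ih =>
    obtain ⟨hp, -⟩ := ih k (by omega)
    obtain ⟨-, hq⟩ := ih (k + 1) (by omega)
    simp [pqAux, hp, hq]

lemma pVec_apply_eq_zero (R : Matrix (Fin N) (Fin N) ℂ) {k l : ℕ} (hkl : k ≤ l) (j : Fin N)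
    (hj : l < j) : pVec R k l j = 0 :=
  (pqAux_apply_eq_zero R (l - k) k j (by omega)).1

lemma qVec_apply_eq_zero (R : Matrix (Fin N) (Fin N) ℂ) {k l : ℕ} (hkl : k ≤ l) (j : Fin N)
    (hj : l < j) : qVec R k l j = 0 :=
  (pqAux_apply_eq_zero R (l - k) k j (by omega)).2

section Shift

variable {R : Matrix (Fin N) (Fin N) ℂ} {s : ℕ}

lemma bform_shiftVec {m : ℕ} (hR : IsShiftInvariant R s)
    (hm : m + s < N) {v w : Fin N → ℂ} (hv : ∀ j : Fin N, m < j → v j = 0)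
    (hw : ∀ j : Fin N, m < j → w j = 0) :
    bform R (shiftVec s v) (shiftVec s w) = bform R v w := by
  have hv' : ∀ j : Fin N, v j ≠ 0 → (j : ℕ) + s < N := fun j hj => by
    have := mt (hv j) hj
    omega
  have hw' : ∀ j : Fin N, w j ≠ 0 → (j : ℕ) + s < N := fun j hj => by
    have := mt (hw j) hj
    omega
  rw [bform_eq_sum, bform_eq_sum]
  symm
  refine Finset.sum_bij_ne_zero
    (fun ij _ h => (⟨ij.1 + s, hv' _ (left_ne_zero_of_mul (left_ne_zero_of_mul h))⟩,
      ⟨ij.2 + s, hw' _ (right_ne_zero_of_mul h)⟩))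
    (fun _ _ _ => Finset.mem_univ _) ?_ ?_ ?_
  · intro a _ _ b _ _ hab
    simp only [Prod.mk.injEq, Fin.mk.injEq, Nat.add_right_cancel_iff] at hab
    exact Prod.ext (Fin.ext hab.1) (Fin.ext hab.2)
  · rintro ⟨i, j⟩ - h
    dsimp only at h
    have hi : s ≤ (i : ℕ) := by
      by_contra! hi
      exact h (by simp [shiftVec_apply_of_lt s v i hi])
    have hj : s ≤ (j : ℕ) := by
      by_contra! hj
      exact h (by simp [shiftVec_apply_of_lt s w j hj])
    obtain ⟨i, _, rfl⟩ := Fin.exists_eq_mk_add_of_le i hi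
    obtain ⟨j, _, rfl⟩ := Fin.exists_eq_mk_add_of_le j hj
    rw [shiftVec_apply_add, shiftVec_apply_add, hR] at h
    exact ⟨(i, j), Finset.mem_univ _, h, rfl⟩
  · rintro ⟨i, j⟩ - h
    rw [shiftVec_apply_add, shiftVec_apply_add, hR]

lemma pqAux_shift (hR : IsShiftInvariant R s) (d k : ℕ) (h : k + d + s < N) :
    pqAux R d (k + s) = (shiftVec s (pqAux R d k).1, shiftVec s (pqAux R d k).2) := by
  induction d generalizing k with
  | zero => simp [pqAux, shiftVec_eVec]
  | succ d ih =>
    have hp : ∀ j : Fin N, k + d + 1 < j → (pqAux R d k).1 j = 0 :=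
      fun j hj => (pqAux_apply_eq_zero R d k j (by omega)).1
    have hq : ∀ j : Fin N, k + d + 1 < j → (pqAux R d (k + 1)).2 j = 0 :=
      fun j hj => (pqAux_apply_eq_zero R d (k + 1) j (by omega)).2
    have hl : ∀ j : Fin N, k + d + 1 < j → eVec N (k + d + 1) j = 0 :=
      fun j hj => eVec_apply_of_ne _ j (by omega)
    have hk : ∀ j : Fin N, k + d + 1 < j → eVec N k j = 0 :=
      fun j hj => eVec_apply_of_ne _ j (by omega)
    have hm : k + d + 1 + s < N := by omega
    have hpq : pqAux R d (k + s + 1) = (shiftVec s (pqAux R d (k + 1)).1,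
        shiftVec s (pqAux R d (k + 1)).2) := by
      rw [add_right_comm]; exact ih (k + 1) (by omega)
    have el : eVec N (k + s + d + 1) = shiftVec s (eVec N (k + d + 1)) := by
      rw [shiftVec_eVec]; congr 1; omega
    simp only [pqAux]
    rw [ih k (by omega), hpq, el, ← shiftVec_eVec s k]
    dsimp only
    rw [bform_shiftVec hR hm hp hl, bform_shiftVec hR hm hq hl, bform_shiftVec hR hm hq hk,
      bform_shiftVec hR hm hp hk, shiftVec_sub_smul, shiftVec_sub_smul]

lemma pVec_shift (hR : IsShiftInvariant R s) {k l : ℕ} (hkl : k ≤ l) (hl : l + s < N) :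
    pVec R (k + s) (l + s) = shiftVec s (pVec R k l) := by
  rw [pVec, pVec, show l + s - (k + s) = l - k by omega, pqAux_shift hR _ _ (by omega)]

lemma qVec_shift (hR : IsShiftInvariant R s) {k l : ℕ} (hkl : k ≤ l) (hl : l + s < N) :
    qVec R (k + s) (l + s) = shiftVec s (qVec R k l) := by
  rw [qVec, qVec, show l + s - (k + s) = l - k by omega, pqAux_shift hR _ _ (by omega)]

lemma bform_pVec_eVec_shift (hR : IsShiftInvariant R s) {k l i m : ℕ} (hkl : k ≤ l) (hl : l ≤ m)
    (hi : i ≤ m) (hm : m + s < N) :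
    bform R (pVec R (k + s) (l + s)) (eVec N (i + s)) = bform R (pVec R k l) (eVec N i) := by
  rw [pVec_shift hR hkl (by omega), ← shiftVec_eVec,
    bform_shiftVec hR hm (fun j hj => pVec_apply_eq_zero R hkl j (by omega))
      (fun j hj => eVec_apply_of_ne i j (by omega))]

lemma bform_qVec_eVec_shift (hR : IsShiftInvariant R s) {k l i m : ℕ} (hkl : k ≤ l) (hl : l ≤ m)
    (hi : i ≤ m) (hm : m + s < N) :
    bform R (qVec R (k + s) (l + s)) (eVec N (i + s)) = bform R (qVec R k l) (eVec N i) := by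
  rw [qVec_shift hR hkl (by omega), ← shiftVec_eVec,
    bform_shiftVec hR hm (fun j hj => qVec_apply_eq_zero R hkl j (by omega))
      (fun j hj => eVec_apply_of_ne i j (by omega))]

lemma aCoef_shift (hR : IsShiftInvariant R s) {k l : ℕ} (hkl : k < l) (hl : l + s < N) :
    aCoef R (k + s) (l + s) = aCoef R k l := by
  rw [aCoef, aCoef, show l + s - 1 = l - 1 + s by omega, show k + s + 1 = k + 1 + s by omega,
    bform_pVec_eVec_shift hR (by omega) (by omega) le_rfl hl,
    bform_qVec_eVec_shift hR (by omega) le_rfl le_rfl hl]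

lemma aCoef'_shift (hR : IsShiftInvariant R s) {k l : ℕ} (hkl : k < l) (hl : l + s < N) :
    aCoef' R (k + s) (l + s) = aCoef' R k l := by
  rw [aCoef', aCoef', show l + s - 1 = l - 1 + s by omega, show k + s + 1 = k + 1 + s by omega,
    bform_pVec_eVec_shift hR (by omega) (by omega) (by omega) hl,
    bform_qVec_eVec_shift hR (by omega) le_rfl (by omega) hl]

lemma aCoef_add_mul (hR : IsShiftInvariant R s) {k l : ℕ} (t : ℕ) (hkl : k < l)
    (hl : l + s * t < N) :
    aCoef R (k + s * t) (l + s * t) = aCoef R k l := by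
  induction t with
  | zero => simp
  | succ t ih =>
    rw [mul_add_one, ← add_assoc] at hl
    rw [mul_add_one, ← add_assoc, ← add_assoc, aCoef_shift hR (by omega) hl, ih (by omega)]

lemma aCoef'_add_mul (hR : IsShiftInvariant R s) {k l : ℕ} (t : ℕ) (hkl : k < l)
    (hl : l + s * t < N) :
    aCoef' R (k + s * t) (l + s * t) = aCoef' R k l := by
  induction t with
  | zero => simp
  | succ t ih =>
    rw [mul_add_one, ← add_assoc] at hl
    rw [mul_add_one, ← add_assoc, ← add_assoc, aCoef'_shift hR (by omega) hl, ih (by omega)]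

end Shift

theorem stmt11_general (n1 n2 : ℕ)
    (R : Matrix (Fin (n1 * n2)) (Fin (n1 * n2)) ℂ)
    (hBT : ∀ (i j : ℕ) (hi : i + n1 < n1 * n2) (hj : j + n1 < n1 * n2),
      R ⟨i + n1, hi⟩ ⟨j + n1, hj⟩ =
        R ⟨i, Nat.lt_of_le_of_lt (Nat.le_add_right i n1) hi⟩
          ⟨j, Nat.lt_of_le_of_lt (Nat.le_add_right j n1) hj⟩) :
    ∀ k l : ℕ, k < l → l ≤ n1 * n2 - 1 →
      aCoef R k l = aCoef R (k % n1) (l - n1 * (k / n1)) ∧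
      aCoef' R k l = aCoef' R (k % n1) (l - n1 * (k / n1)) := by
  intro k l hkl hl
  have hR : IsShiftInvariant R n1 := fun i j hi hj => hBT i j hi hj
  have hk : k % n1 + n1 * (k / n1) = k := Nat.mod_add_div k n1
  have hsec : n1 * (k / n1) ≤ k := Nat.mul_div_le k n1
  have hl' : l - n1 * (k / n1) + n1 * (k / n1) = l := by omega
  have hkl' : k % n1 < l - n1 * (k / n1) := by omega
  have hN : l - n1 * (k / n1) + n1 * (k / n1) < n1 * n2 := by omega
  rw [← aCoef_add_mul hR _ hkl' hN, ← aCoef'_add_mul hR _ hkl' hN, hk, hl']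
  exact ⟨rfl, rfl⟩

/-- Theorem 1 (reflection coefficients): for a Hermitian positive definite block-Toeplitz
matrix with block size `n1`, `a_{k,l} = a_{k mod n1, l - (k sec n1)}` and likewise for `a'`,
where `k sec n1 = n1 * (k / n1)`. -/
theorem stmt11 (n1 n2 : ℕ) (h1 : 1 ≤ n1) (h2 : 1 ≤ n2)
    (R : Matrix (Fin (n1 * n2)) (Fin (n1 * n2)) ℂ) (hR : R.PosDef)
    (hBT : ∀ (i j : ℕ) (hi : i + n1 < n1 * n2) (hj : j + n1 < n1 * n2),
      R ⟨i + n1, hi⟩ ⟨j + n1, hj⟩ =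
        R ⟨i, Nat.lt_of_le_of_lt (Nat.le_add_right i n1) hi⟩
          ⟨j, Nat.lt_of_le_of_lt (Nat.le_add_right j n1) hj⟩) :
    ∀ k l : ℕ, k < l → l ≤ n1 * n2 - 1 →
      aCoef R k l = aCoef R (k % n1) (l - n1 * (k / n1)) ∧
      aCoef' R k l = aCoef' R (k % n1) (l - n1 * (k / n1)) :=
  stmt11_general n1 n2 R hBT
end
end
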